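/- arXiv:1105.3148 — 4 statements merged into one kernel-verified Lean document; each statement's English description precedes it below -/
import Mathlib

section
/- Let P be a finite Eulerian poset of rank d ≥ 2 with minimum 0̂ and maximum 1̂, and let Q be the subposet obtained from P by removing all atoms of P. Then μ_Q(0̂, 1̂) = (-1)^{d-1} (f₀(P) - 1), where f₀(P) is the number of atoms of P. -/
open Finset

/-- The Möbius function of a finite partial order, valued in `ℤ`. -/
noncomputable def pmu (α : Type*) [PartialOrder α] [Finite α] : α → α → ℤ :=
  letI := Fintype.ofFinite α
  letI := Classical.decEq α
  letI : @DecidableRel α α (· ≤ ·) := Classical.decRel _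
  letI : @DecidableRel α α (· < ·) := Classical.decRel _
  letI := Fintype.toLocallyFiniteOrder (α := α)
  fun x y => IncidenceAlgebra.mu ℤ x y

variable {α : Type*} [PartialOrder α]

/-- `c` is a maximal chain of the subposet `S`. -/
def IsMaxChainIn (S : Set α) (c : Finset α) : Prop :=
  ↑c ⊆ S ∧ IsChain (· ≤ ·) (c : Set α) ∧
    ∀ c' : Finset α, ↑c' ⊆ S → IsChain (· ≤ ·) (c' : Set α) → c ⊆ c' → c = c'

/-- The interval `[x,y]` is graded of rank `r`: every maximal chain of it has `r+1` elements. -/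
def IntervalGraded (x y : α) (r : ℕ) : Prop :=
  ∀ c : Finset α, IsMaxChainIn (Set.Icc x y) c → c.card = r + 1

/-- The subposet `S` is graded of rank `d`: every maximal chain of `S` has `d+1` elements. -/
def GradedRank (S : Set α) (d : ℕ) : Prop :=
  ∀ c : Finset α, IsMaxChainIn S c → c.card = d + 1

/-- A finite poset is lower Eulerian with rank function `ρ` on intervals: every interval
`[x,y]` is graded of rank `ρ x y` with `μ(x,y) = (-1)^{ρ x y}` (a minimum element is
required separately, via `OrderBot`). -/
def LowerEulerianWith (α : Type*) [PartialOrder α] [Finite α] (ρ : α → α → ℕ) : Prop :=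
  ∀ x y : α, x ≤ y → IntervalGraded x y (ρ x y) ∧ pmu α x y = (-1) ^ ρ x y

instance (α : Type*) [Fintype α] : Fintype (WithTop α) := instFintypeOption
instance (α : Type*) [Fintype α] : Fintype (WithBot α) := instFintypeOption

instance (α : Type*) [Finite α] : Finite (WithTop α) :=
  letI := Fintype.ofFinite α; @Finite.of_fintype (WithTop α) (instFintypeOption (α := α))
instance (α : Type*) [Finite α] : Finite (WithBot α) :=
  letI := Fintype.ofFinite α; @Finite.of_fintype (WithBot α) (instFintypeOption (α := α))

/-! For `x ∈ Q` the candidate `g x = μ_P(0̂, x) (1 - a x)`, where `a x` counts the atoms below `x`,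
satisfies the recursion that characterises `μ_Q(0̂, ·)`: atoms have `a = 1` and drop out of the sum,
`∑_{z ≤ x} μ_P(0̂, z) = 0`, and `∑_{z ≤ x} μ_P(0̂, z) a z = ∑_{t ≤ x atom} ∑_{t ≤ z ≤ x} μ_P(0̂, z)`
vanishes because `μ_P(0̂, z) = -μ_P(t, z)` in an Eulerian poset (ranks add along `0̂ ⋖ t ≤ z`).
At `x = 1̂` this gives `μ_Q(0̂, 1̂) = (-1)^d (1 - f₀(P))`. -/

section Moebius

variable {β : Type*} [PartialOrder β]

-- The local instances are exactly those inside `pmu`, so that it unfolds to `IncidenceAlgebra.mu`.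
lemma pmu_self [Finite β] (x : β) : pmu β x x = 1 := by
  let _ := Fintype.ofFinite β
  let _ := Classical.decEq β
  let _ : DecidableRel (α := β) (· ≤ ·) := Classical.decRel _
  let _ : DecidableRel (α := β) (· < ·) := Classical.decRel _
  let _ := Fintype.toLocallyFiniteOrder (α := β)
  exact IncidenceAlgebra.mu_self x

variable [Fintype β] [DecidableRel (α := β) (· ≤ ·)]

lemma sum_pmu_eq_zero {x y : β} (hxy : x ≠ y) :
    ∑ z with x ≤ z ∧ z ≤ y, pmu β x z = 0 := by
  let _ := Fintype.ofFinite β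
  let _ := Classical.decEq β
  let _ : DecidableRel (α := β) (· ≤ ·) := Classical.decRel _
  let _ : DecidableRel (α := β) (· < ·) := Classical.decRel _
  let _ := Fintype.toLocallyFiniteOrder (α := β)
  have h := IncidenceAlgebra.sum_Icc_mu_right (𝕜 := ℤ) x y
  rw [if_neg hxy] at h
  rw [← h]
  refine sum_congr (ext fun z => ?_) fun _ _ => rfl
  simp

lemma pmu_eq_of_sum_eq_zero {x : β} (g : β → ℤ) (hx : g x = 1)
    (hg : ∀ y, x < y → ∑ z with x ≤ z ∧ z ≤ y, g z = 0) {y : β} (hxy : x ≤ y) :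
    pmu β x y = g y := by
  induction y using WellFoundedLT.induction with
  | _ y ih =>
  rcases hxy.eq_or_lt with rfl | hlt
  · rw [pmu_self, hx]
  have hdiff : ∑ z with x ≤ z ∧ z ≤ y, (pmu β x z - g z) = 0 := by
    rw [sum_sub_distrib, sum_pmu_eq_zero hlt.ne, hg y hlt, sub_zero]
  rw [sum_eq_single_of_mem y (by simp [hxy])] at hdiff
  · exact sub_eq_zero.1 hdiff
  · intro z hz hzy
    simp only [mem_filter, mem_univ, true_and] at hz
    rw [ih z (lt_of_le_of_ne hz.2 hzy) hz.1, sub_self]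

end Moebius

lemma exists_isMaxChainIn_superset [Finite α] {S : Set α} {c : Finset α} (hcS : ↑c ⊆ S)
    (hc : IsChain (· ≤ ·) (c : Set α)) : ∃ m, IsMaxChainIn S m ∧ c ⊆ m := by
  classical
  have := Fintype.ofFinite α
  obtain ⟨m, hm, hmax⟩ := exists_max_image
    {m : Finset α | ↑m ⊆ S ∧ IsChain (· ≤ ·) (m : Set α) ∧ c ⊆ m} card
    ⟨c, by simp [hcS, hc]⟩
  simp only [mem_filter, mem_univ, true_and] at hm hmax
  refine ⟨m, ⟨hm.1, hm.2.1, fun c' hc'S hc' hmc' => ?_⟩, hm.2.2⟩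
  exact eq_of_subset_of_card_le hmc' (hmax c' ⟨hc'S, hc', hm.2.2.trans hmc'⟩)

namespace IsMaxChainIn

variable {S : Set α} {c : Finset α}

lemma mem_of_forall_le_or_le (hc : IsMaxChainIn S c) {a : α} (haS : a ∈ S)
    (hcomp : ∀ b ∈ c, a ≤ b ∨ b ≤ a) : a ∈ c := by
  classical
  have h := hc.2.2 (insert a c) (by simpa using Set.insert_subset haS hc.1)
    (by simpa using hc.2.1.insert fun b hb _ => hcomp b hb) (subset_insert _ _)
  exact h ▸ mem_insert_self a c

variable {x y z : α}

lemma left_mem (hc : IsMaxChainIn (Set.Icc x y) c) (hxy : x ≤ y) : x ∈ c :=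
  hc.mem_of_forall_le_or_le ⟨le_rfl, hxy⟩ fun _ hb => Or.inl (hc.1 hb).1

lemma right_mem (hc : IsMaxChainIn (Set.Icc x y) c) (hxy : x ≤ y) : y ∈ c :=
  hc.mem_of_forall_le_or_le ⟨hxy, le_rfl⟩ fun _ hb => Or.inr (hc.1 hb).2

lemma pair_of_covBy [DecidableEq α] (hxy : x ⋖ y) : IsMaxChainIn (Set.Icc x y) {x, y} := by
  refine ⟨by simp [hxy.Icc_eq], by simpa using IsChain.pair hxy.le, fun c' hc' _ hsub => ?_⟩
  refine hsub.antisymm fun b hb => ?_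
  simpa [hxy.Icc_eq] using hc' hb

lemma union [DecidableEq α] {d : Finset α} (hc : IsMaxChainIn (Set.Icc x y) c)
    (hd : IsMaxChainIn (Set.Icc y z) d) (hxy : x ≤ y) (hyz : y ≤ z) :
    IsMaxChainIn (Set.Icc x z) (c ∪ d) := by
  have hc_le (a) (ha : a ∈ c) : a ≤ y := (hc.1 ha).2
  have hd_ge (a) (ha : a ∈ d) : y ≤ a := (hd.1 ha).1
  refine ⟨?_, ?_, fun c' hc'S hc' hsub => hsub.antisymm fun b hb => ?_⟩
  · simp only [coe_union, Set.union_subset_iff]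
    exact ⟨hc.1.trans (Set.Icc_subset_Icc_right hyz), hd.1.trans (Set.Icc_subset_Icc_left hxy)⟩
  · rw [coe_union, isChain_union]
    exact ⟨hc.2.1, hd.2.1, fun a ha b hb _ => Or.inl ((hc_le a ha).trans (hd_ge b hb))⟩
  have hcomp (a) (ha : a ∈ c ∪ d) : b ≤ a ∨ a ≤ b := hc'.total hb (hsub ha)
  rcases hcomp y (mem_union_left _ (hc.right_mem hxy)) with hby | hyb
  · exact mem_union_left _ <| hc.mem_of_forall_le_or_le ⟨(hc'S hb).1, hby⟩
      fun a ha => hcomp a (mem_union_left _ ha)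
  · exact mem_union_right _ <| hd.mem_of_forall_le_or_le ⟨hyb, (hc'S hb).2⟩
      fun a ha => hcomp a (mem_union_right _ ha)

lemma inter_eq {d : Finset α} [DecidableEq α] (hc : IsMaxChainIn (Set.Icc x y) c)
    (hd : IsMaxChainIn (Set.Icc y z) d) (hxy : x ≤ y) (hyz : y ≤ z) : c ∩ d = {y} := by
  ext b
  simp only [mem_inter, mem_singleton]
  refine ⟨fun h => (hc.1 h.1).2.antisymm (hd.1 h.2).1, ?_⟩
  rintro rfl
  exact ⟨hc.right_mem hxy, hd.left_mem hyz⟩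

end IsMaxChainIn

namespace IntervalGraded

variable {x y z : α} {r s n : ℕ}

lemma eq_one_of_covBy (h : IntervalGraded x y r) (hxy : x ⋖ y) : r = 1 := by
  classical
  have := h _ (IsMaxChainIn.pair_of_covBy hxy)
  rw [card_pair hxy.ne] at this
  omega

lemma add_eq [Finite α] (h₁ : IntervalGraded x y r) (h₂ : IntervalGraded y z s)
    (h : IntervalGraded x z n) (hxy : x ≤ y) (hyz : y ≤ z) : r + s = n := by
  classical
  obtain ⟨c, hc, -⟩ := exists_isMaxChainIn_superset (S := Set.Icc x y) (c := ∅) (by simp) (by simp)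
  obtain ⟨d, hd, -⟩ := exists_isMaxChainIn_superset (S := Set.Icc y z) (c := ∅) (by simp) (by simp)
  have hcard := card_union_add_card_inter c d
  rw [hc.inter_eq hd hxy hyz, card_singleton, h _ (hc.union hd hxy hyz), h₁ c hc, h₂ d hd] at hcard
  omega

end IntervalGraded

lemma Finset.sum_subtype_filter_of_eq_zero {ι M : Type*} [Fintype ι] [AddCommMonoid M]
    {p : ι → Prop} [Fintype (Subtype p)] (q : ι → Prop) [DecidablePred q] (f : ι → M)
    (hf : ∀ i, ¬p i → f i = 0) : ∑ i : Subtype p with q i.1, f i.1 = ∑ i with q i, f i := by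
  classical
  rw [sum_filter, sum_filter,
    ← sum_subtype (univ.filter p) (by simp) (fun i => if q i then f i else 0)]
  refine sum_subset (filter_subset _ _) fun i _ hi => ?_
  simp [hf i (by simpa using hi)]

section Eulerian

variable {ρ : α → α → ℕ}

lemma LowerEulerianWith.pmu_eq_neg_pmu_of_covBy [Finite α] (hE : LowerEulerianWith α ρ)
    {x t z : α} (hxt : x ⋖ t) (htz : t ≤ z) : pmu α x z = -pmu α t z := by
  have hxz := hxt.le.trans htz
  have h₁ := (hE x t hxt.le).1.eq_one_of_covBy hxt
  have hadd := (hE x t hxt.le).1.add_eq (hE t z htz).1 (hE x z hxz).1 hxt.le htz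
  rw [(hE x z hxz).2, (hE t z htz).2, ← hadd, h₁, pow_add, pow_one, neg_one_mul]

variable [Fintype α] [OrderBot α]

open scoped Classical in
noncomputable def atomsBelow (x : α) : Finset α := {t | IsAtom t ∧ t ≤ x}

@[simp]
lemma mem_atomsBelow {x t : α} : t ∈ atomsBelow x ↔ IsAtom t ∧ t ≤ x := by
  simp [atomsBelow]

lemma atomsBelow_bot : atomsBelow (⊥ : α) = ∅ := by
  ext t
  simpa using fun ht : IsAtom t => ht.1

lemma IsAtom.atomsBelow_eq {t : α} (ht : IsAtom t) : atomsBelow t = {t} := by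
  ext s
  simp only [mem_atomsBelow, mem_singleton]
  refine ⟨fun ⟨hs, hst⟩ => (ht.le_iff.1 hst).resolve_left hs.1, ?_⟩
  rintro rfl
  exact ⟨ht, le_rfl⟩

lemma LowerEulerianWith.sum_pmu_bot_mul_card_atomsBelow [DecidableRel (α := α) (· ≤ ·)]
    (hE : LowerEulerianWith α ρ) {x : α} (hx : ¬IsAtom x) :
    ∑ z with ⊥ ≤ z ∧ z ≤ x, pmu α ⊥ z * #(atomsBelow z) = 0 := by
  calc ∑ z with ⊥ ≤ z ∧ z ≤ x, pmu α ⊥ z * #(atomsBelow z)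
      = ∑ z with ⊥ ≤ z ∧ z ≤ x, ∑ t ∈ atomsBelow z, pmu α ⊥ z := by simp [mul_comm]
    _ = ∑ t ∈ atomsBelow x, ∑ z with t ≤ z ∧ z ≤ x, pmu α ⊥ z := by
        refine sum_comm' fun z t => ?_
        simp only [mem_filter, mem_univ, true_and, mem_atomsBelow, bot_le]
        exact ⟨fun ⟨hzx, ht, htz⟩ => ⟨⟨htz, hzx⟩, ht, htz.trans hzx⟩,
          fun ⟨⟨htz, hzx⟩, ht, _⟩ => ⟨hzx, ht, htz⟩⟩
    _ = ∑ t ∈ atomsBelow x, -∑ z with t ≤ z ∧ z ≤ x, pmu α t z := by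
        refine sum_congr rfl fun t ht => ?_
        rw [← sum_neg_distrib]
        refine sum_congr rfl fun z hz => ?_
        exact hE.pmu_eq_neg_pmu_of_covBy (mem_atomsBelow.1 ht).1.bot_covBy (mem_filter.1 hz).2.1
    _ = 0 := by
        refine sum_eq_zero fun t ht => ?_
        rw [sum_pmu_eq_zero, neg_zero]
        rintro rfl
        exact hx (mem_atomsBelow.1 ht).1

lemma LowerEulerianWith.pmu_withoutAtoms_bot (hE : LowerEulerianWith α ρ) (hbot : ¬IsAtom (⊥ : α))
    (x : {x : α // ¬IsAtom x}) :
    pmu {x : α // ¬IsAtom x} ⟨⊥, hbot⟩ x = pmu α ⊥ x * (1 - #(atomsBelow x.1)) := by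
  classical
  let g (z : α) : ℤ := pmu α ⊥ z * (1 - #(atomsBelow z))
  have hg : ∀ t, ¬¬IsAtom t → g t = 0 := fun t ht => by
    simp [g, (not_not.1 ht).atomsBelow_eq]
  refine pmu_eq_of_sum_eq_zero (fun w : {x : α // ¬IsAtom x} => g w.1)
    (by simp [g, pmu_self, atomsBelow_bot]) (fun y hy => ?_) (Subtype.mk_le_mk.2 bot_le)
  refine (sum_subtype_filter_of_eq_zero (fun z => ⊥ ≤ z ∧ z ≤ y.1) g hg).trans ?_
  have hy₀ : ⊥ ≠ y.1 := fun h => hy.ne (Subtype.ext h)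
  simp only [g, mul_sub, mul_one, sum_sub_distrib, sum_pmu_eq_zero hy₀,
    hE.sum_pmu_bot_mul_card_atomsBelow y.2, sub_zero]

end Eulerian

open scoped Classical in
theorem stmt1_general (α : Type*) [PartialOrder α] [Fintype α] [BoundedOrder α]
    (ρ : α → α → ℕ) (hE : LowerEulerianWith α ρ) (d : ℕ) (hd : 2 ≤ d)
    (hrank : ρ ⊥ ⊤ = d)
    (hbot : ¬ IsAtom (⊥ : α)) (htop : ¬ IsAtom (⊤ : α)) :
    pmu {x : α // ¬ IsAtom x} ⟨⊥, hbot⟩ ⟨⊤, htop⟩ =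
      (-1 : ℤ) ^ (d - 1) * (((Finset.univ.filter fun x : α => IsAtom x).card : ℤ) - 1) := by
  have hatoms : atomsBelow (⊤ : α) = univ.filter IsAtom := by ext; simp
  rw [hE.pmu_withoutAtoms_bot hbot, (hE ⊥ ⊤ bot_le).2, hrank, hatoms]
  obtain ⟨e, rfl⟩ : ∃ e, d = e + 1 := ⟨d - 1, by omega⟩
  rw [Nat.add_sub_cancel, pow_succ]
  ring

open scoped Classical in
/-- If `P` is a finite Eulerian poset of rank `d ≥ 2` and `Q` is `P` minus
its atoms, then `μ_Q(0̂,1̂) = (-1)^{d-1} (f₀(P) - 1)` where `f₀(P)` is the number of atoms. -/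
theorem stmt1 (α : Type*) [PartialOrder α] [Fintype α] [BoundedOrder α]
    (ρ : α → α → ℕ) (hE : LowerEulerianWith α ρ) (d : ℕ) (hd : 2 ≤ d)
    (hrank : ρ ⊥ ⊤ = d) (hgr : GradedRank (Set.univ : Set α) d)
    (hbot : ¬ IsAtom (⊥ : α)) (htop : ¬ IsAtom (⊤ : α)) :
    pmu {x : α // ¬ IsAtom x} ⟨⊥, hbot⟩ ⟨⊤, htop⟩ =
      (-1 : ℤ) ^ (d - 1) * (((Finset.univ.filter fun x : α => IsAtom x).card : ℤ) - 1) :=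
  stmt1_general α ρ hE d hd hrank hbot htop
end

section
/- Let P be a finite locally Eulerian poset and let Q be the poset obtained from Int(P) (intervals of P ordered by inclusion) by adjoining a minimum element 0̂. Then Q is lower Eulerian: every interval of Q is graded and μ_Q(x,y) = (-1)^{ρ(x,y)} for all x ≤ y in Q. -/
open Finset

variable {α : Type*} [PartialOrder α]

/-- The poset of nonempty closed intervals `[x, y]` of `α`, ordered by inclusion. -/
def Intvl (α : Type*) [Preorder α] : Type _ := {p : α × α // p.1 ≤ p.2}

namespace Intvl

variable {α : Type*} [PartialOrder α]

instance : PartialOrder (Intvl α) where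
  le i j := j.1.1 ≤ i.1.1 ∧ i.1.2 ≤ j.1.2
  le_refl i := ⟨le_refl _, le_refl _⟩
  le_trans i j l h1 h2 := ⟨le_trans h2.1 h1.1, le_trans h1.2 h2.2⟩
  le_antisymm i j h1 h2 := Subtype.ext (Prod.ext (le_antisymm h2.1 h1.1) (le_antisymm h1.2 h2.2))

instance [Finite α] : Finite (Intvl α) := Subtype.finite

end Intvl

/-!
Adjoin `0̂` to `Int(P)` and rank it by `0̂ ↦ 0`, `[a, b] ↦ ρ(a, b) + 1`. Maximal chains of
`[x, y]` and `[y, z]` glue to a maximal chain of `[x, z]`, so `ρ` is additive; a cover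
`[b, c] ⋖ [a, d]` moves one endpoint along a cover of `P`, so the rank goes up by exactly one, and
a rank function grades every interval. For the Möbius function it suffices to check that
`(-1)^rank` has the defining sums of `μ`. Above `[b, c]` the interval `[[b, c], [a, d]]` is
`[a, b]ᵒᵈ × [c, d]` and the sum factors as `(∑ μ(u, b)) (∑ μ(c, v))`; above `0̂` it is
`1 - ∑_{a ≤ u ≤ v ≤ d} μ(u, v) = 0`, which amounts to `μ(0̂, [a, d]) = -μ(a, d)`.
-/

section MaxChains

variable {S : Set α} {c : Finset α} {x y z : α}

theorem IsMaxChainIn.exists [Finite α] (S : Set α) : ∃ c, IsMaxChainIn S c := by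
  obtain ⟨c, hc, hmax⟩ := Set.Finite.exists_maximalFor Finset.card
    {c : Finset α | ↑c ⊆ S ∧ IsChain (· ≤ ·) (c : Set α)} (Set.toFinite _) ⟨∅, by simp, by simp⟩
  exact ⟨c, hc.1, hc.2, fun c' hcS hch hsub =>
    eq_of_subset_of_card_le hsub (hmax ⟨hcS, hch⟩ (card_le_card hsub))⟩

theorem isMaxChainIn_coe {s : Finset α} (hs : IsChain (· ≤ ·) (s : Set α)) :
    IsMaxChainIn (s : Set α) s :=
  ⟨subset_rfl, hs, fun _ hcs _ hsub => subset_antisymm hsub (coe_subset.1 hcs)⟩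

theorem IsMaxChainIn.mem_of_forall_le_or_le_s3 (hc : IsMaxChainIn S c) {a : α} (ha : a ∈ S)
    (hcomp : ∀ b ∈ c, a ≤ b ∨ b ≤ a) : a ∈ c := by
  classical
  obtain ⟨hcS, hch, hmax⟩ := hc
  have hins : c = insert a c := hmax _ (by simpa [Set.insert_subset_iff] using ⟨ha, hcS⟩)
    (by rw [coe_insert]; exact hch.insert fun b hb _ => hcomp b hb) (subset_insert a c)
  exact hins ▸ mem_insert_self a c

theorem IsMaxChainIn.left_mem_s3 (hc : IsMaxChainIn (Set.Icc x y) c) (hxy : x ≤ y) : x ∈ c :=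
  hc.mem_of_forall_le_or_le_s3 ⟨le_rfl, hxy⟩ fun _ hb => Or.inl (hc.1 hb).1

theorem IsMaxChainIn.right_mem_s3 (hc : IsMaxChainIn (Set.Icc x y) c) (hxy : x ≤ y) : y ∈ c :=
  hc.mem_of_forall_le_or_le_s3 ⟨hxy, le_rfl⟩ fun _ hb => Or.inr (hc.1 hb).2

theorem IsMaxChainIn.eq_singleton (hc : IsMaxChainIn (Set.Icc x x) c) : c = {x} :=
  eq_singleton_iff_unique_mem.2 ⟨hc.left_mem_s3 le_rfl, fun _ hz => by simpa using hc.1 hz⟩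

theorem IsMaxChainIn.exists_covBy_erase [DecidableEq α] (hc : IsMaxChainIn (Set.Icc x y) c)
    (hxy : x < y) : ∃ m, x ⋖ m ∧ m ≤ y ∧ IsMaxChainIn (Set.Icc m y) (c.erase x) := by
  have hcS := hc.1
  have hch := hc.2.1
  obtain ⟨m, hm, hmin⟩ := exists_minimal ⟨y, mem_erase.2 ⟨hxy.ne', hc.right_mem_s3 hxy.le⟩⟩
  have hmc : m ∈ c := mem_of_mem_erase hm
  have hm_le : ∀ b ∈ c.erase x, m ≤ b := fun b hb =>
    (hch.total (mem_of_mem_erase hb) hmc).elim (fun hbm => hmin hb hbm) id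
  have hxm : x < m := (hcS hmc).1.lt_of_ne (mem_erase.1 hm).1.symm
  have hsub : ∀ b ∈ c, b = x ∨ m ≤ b := fun b hb =>
    (eq_or_ne b x).imp_right fun hbx => hm_le b (mem_erase.2 ⟨hbx, hb⟩)
  have hcov : x ⋖ m := by
    refine ⟨hxm, fun w hxw hwm => ?_⟩
    have hw : w ∈ c := hc.mem_of_forall_le_or_le_s3 ⟨hxw.le, hwm.le.trans (hcS hmc).2⟩ fun b hb =>
      (hsub b hb).elim (fun hbx => Or.inr (hbx ▸ hxw.le)) fun hmb => Or.inl (hwm.le.trans hmb)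
    exact (hsub w hw).elim (fun hwx => hxw.ne' hwx) fun hmw => hmw.not_gt hwm
  refine ⟨m, hcov, (hcS hmc).2, fun b hb => ⟨hm_le b hb, (hcS (mem_of_mem_erase hb)).2⟩,
    hch.mono (coe_subset.2 (erase_subset x c)), fun c' hc'S hch' hsub' => ?_⟩
  refine subset_antisymm hsub' fun w hw => mem_erase.2 ⟨(hxm.trans_le (hc'S hw).1).ne', ?_⟩
  refine hc.mem_of_forall_le_or_le_s3 ⟨hxm.le.trans (hc'S hw).1, (hc'S hw).2⟩ fun b hb => ?_
  rcases eq_or_ne b x with rfl | hbx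
  · exact Or.inr (hxm.le.trans (hc'S hw).1)
  · exact hch'.total hw (hsub' (mem_erase.2 ⟨hbx, hb⟩))

theorem IsMaxChainIn.union_s3 [DecidableEq α] {c₁ c₂ : Finset α}
    (hc₁ : IsMaxChainIn (Set.Icc x y) c₁) (hc₂ : IsMaxChainIn (Set.Icc y z) c₂)
    (hxy : x ≤ y) (hyz : y ≤ z) : IsMaxChainIn (Set.Icc x z) (c₁ ∪ c₂) := by
  have hle : ∀ a ∈ c₁, ∀ b ∈ c₂, a ≤ b := fun a ha b hb => (hc₁.1 ha).2.trans (hc₂.1 hb).1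
  refine ⟨?_, ?_, fun c' hc'S hch' hsub => subset_antisymm hsub fun w hw => ?_⟩
  · rw [coe_union]
    exact Set.union_subset (hc₁.1.trans (Set.Icc_subset_Icc_right hyz))
      (hc₂.1.trans (Set.Icc_subset_Icc_left hxy))
  · rw [coe_union]
    exact isChain_union.2 ⟨hc₁.2.1, hc₂.2.1, fun a ha b hb _ => Or.inl (hle a ha b hb)⟩
  · have hcomp : ∀ b ∈ c₁ ∪ c₂, w ≤ b ∨ b ≤ w := fun b hb => hch'.total hw (hsub hb)
    rcases hch'.total hw (hsub (mem_union_left _ (hc₁.right_mem_s3 hxy))) with hwy | hyw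
    · exact mem_union_left _ (hc₁.mem_of_forall_le_or_le_s3 ⟨(hc'S hw).1, hwy⟩
        fun b hb => hcomp b (mem_union_left _ hb))
    · exact mem_union_right _ (hc₂.mem_of_forall_le_or_le_s3 ⟨hyw, (hc'S hw).2⟩
        fun b hb => hcomp b (mem_union_right _ hb))

end MaxChains

section Graded

variable {x y z : α} {r r₁ r₂ : ℕ}

theorem IsMaxChainIn.add_card_eq (rk : α → ℕ) (hrk : ∀ u v, u ⋖ v → rk v = rk u + 1)
    {c : Finset α} (hc : IsMaxChainIn (Set.Icc x y) c) (hxy : x ≤ y) :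
    rk x + c.card = rk y + 1 := by
  classical
  induction hn : c.card generalizing x c with
  | zero => exact absurd hn (card_ne_zero_of_mem (hc.left_mem_s3 hxy))
  | succ n ih =>
    rcases hxy.eq_or_lt with rfl | hlt
    · rw [hc.eq_singleton, card_singleton] at hn
      omega
    · obtain ⟨m, hxm, hmy, hm⟩ := hc.exists_covBy_erase hlt
      have := ih hm hmy (by rw [card_erase_of_mem (hc.left_mem_s3 hxy), hn, Nat.add_sub_cancel])
      rw [hrk x m hxm] at this
      omega

theorem IntervalGraded.of_covBy (rk : α → ℕ) (hrk : ∀ u v, u ⋖ v → rk v = rk u + 1)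
    (hxy : x ≤ y) : IntervalGraded x y (rk y - rk x) := fun c hc => by
  have := hc.add_card_eq rk hrk hxy
  have := card_pos.2 ⟨x, hc.left_mem_s3 hxy⟩
  omega

theorem IntervalGraded.eq_zero (h : IntervalGraded x x r) : r = 0 := by
  have := h {x} (by
    rw [Set.Icc_self, ← coe_singleton]
    exact isMaxChainIn_coe (by rw [coe_singleton]; exact IsChain.singleton))
  simpa [eq_comm] using this

theorem IntervalGraded.eq_one (hxy : x ⋖ y) (h : IntervalGraded x y r) : r = 1 := by
  classical
  have := h {x, y} (by
    rw [hxy.Icc_eq, ← coe_pair]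
    exact isMaxChainIn_coe (by rw [coe_pair]; exact IsChain.pair hxy.le))
  rw [card_pair hxy.ne] at this
  omega

theorem IntervalGraded.eq_add [Finite α] (h : IntervalGraded x z r) (h₁ : IntervalGraded x y r₁)
    (h₂ : IntervalGraded y z r₂) (hxy : x ≤ y) (hyz : y ≤ z) : r = r₁ + r₂ := by
  classical
  obtain ⟨c₁, hc₁⟩ := IsMaxChainIn.exists (Set.Icc x y)
  obtain ⟨c₂, hc₂⟩ := IsMaxChainIn.exists (Set.Icc y z)
  have hinter : c₁ ∩ c₂ = {y} := eq_singleton_iff_unique_mem.2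
    ⟨mem_inter.2 ⟨hc₁.right_mem_s3 hxy, hc₂.left_mem_s3 hyz⟩, fun w hw =>
      le_antisymm (hc₁.1 (mem_inter.1 hw).1).2 (hc₂.1 (mem_inter.1 hw).2).1⟩
  have := card_union_add_card_inter c₁ c₂
  rw [h _ (hc₁.union_s3 hc₂ hxy hyz), hinter, h₁ _ hc₁, h₂ _ hc₂, card_singleton] at this
  omega

end Graded

section Mobius

variable {β : Type*} [PartialOrder β] [Finite β] [LocallyFiniteOrder β] [DecidableEq β]

theorem pmu_eq_mu (x y : β) : pmu β x y = IncidenceAlgebra.mu ℤ x y := by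
  unfold pmu
  congr! 1
  congr 1 <;> exact Subsingleton.elim _ _

theorem pmu_eq_of_sum_Icc (f : β → β → ℤ)
    (hf : ∀ x y, x ≤ y → ∑ z ∈ Icc x y, f x z = if x = y then 1 else 0) {x y : β}
    (hxy : x ≤ y) : pmu β x y = f x y := by
  classical
  let F : IncidenceAlgebra ℤ β := ⟨fun x y => if x ≤ y then f x y else 0, fun _ _ h => if_neg h⟩
  have hF : F * IncidenceAlgebra.zeta ℤ = 1 := by
    ext a b
    rw [IncidenceAlgebra.mul_apply, IncidenceAlgebra.one_apply]
    by_cases hab : a ≤ b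
    · rw [← hf a b hab]
      refine sum_congr rfl fun z hz => ?_
      simp [F, (mem_Icc.1 hz).1, (mem_Icc.1 hz).2]
    · rw [Icc_eq_empty hab, sum_empty, if_neg fun h => hab h.le]
  -- a left inverse of `ζ` equals its right inverse `μ`
  have hmu : IncidenceAlgebra.mu ℤ = F := by
    rw [← one_mul (IncidenceAlgebra.mu ℤ), ← hF, mul_assoc, IncidenceAlgebra.zeta_mul_mu,
      mul_one]
  rw [pmu_eq_mu, hmu]
  exact if_pos hxy

end Mobius

theorem WithBot.sum_Icc_bot_coe {β M : Type*} [PartialOrder β] [Fintype β] [DecidableLE β]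
    [LocallyFiniteOrder (WithBot β)] [AddCommMonoid M] (b : β) (f : WithBot β → M) :
    ∑ Z ∈ Icc ⊥ (b : WithBot β), f Z = f ⊥ + ∑ k with k ≤ b, f k := by
  classical
  have : Icc ⊥ (b : WithBot β) = insert ⊥ (({k | k ≤ b} : Finset β).map .coeWithBot) := by
    ext Z
    cases Z <;> simp
  rw [this, sum_insert (by simp), sum_map]
  rfl

theorem WithBot.sum_Icc_coe_coe {β M : Type*} [PartialOrder β] [LocallyFiniteOrder β]
    [LocallyFiniteOrder (WithBot β)] [AddCommMonoid M] (a b : β) (f : WithBot β → M) :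
    ∑ Z ∈ Icc (a : WithBot β) b, f Z = ∑ k ∈ Icc a b, f k := by
  have : Icc (a : WithBot β) b = (Icc a b).map .coeWithBot := by
    ext Z
    cases Z <;> simp
  rw [this, sum_map]
  rfl

namespace Intvl

/-- `Int(P)` is the upper set `{(a, b) | a ≤ b}` of `Pᵒᵈ × P`, so its covers are those of the
product. -/
def toDualProd : Intvl α ↪o αᵒᵈ × α :=
  OrderEmbedding.ofMapLEIff (fun i => (OrderDual.toDual i.1.1, i.1.2)) fun _ _ => Iff.rfl

theorem isUpperSet_range_toDualProd : IsUpperSet (Set.range (toDualProd (α := α))) := by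
  rintro p q hpq ⟨i, rfl⟩
  exact ⟨⟨(OrderDual.ofDual q.1, q.2),
    (show OrderDual.ofDual q.1 ≤ i.1.1 from hpq.1).trans (i.2.trans hpq.2)⟩, rfl⟩

theorem covBy_iff {i j : Intvl α} :
    i ⋖ j ↔ (j.1.1 ⋖ i.1.1 ∧ i.1.2 = j.1.2) ∨ (i.1.2 ⋖ j.1.2 ∧ i.1.1 = j.1.1) := by
  rw [← isUpperSet_range_toDualProd.ordConnected.apply_covBy_apply_iff toDualProd]
  change (OrderDual.toDual i.1.1, i.1.2) ⋖ (OrderDual.toDual j.1.1, j.1.2) ↔ _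
  rw [Prod.mk_covBy_mk_iff, toDual_covBy_toDual_iff, OrderDual.toDual_inj]

theorem ext_iff {i j : Intvl α} : i = j ↔ i.1.1 = j.1.1 ∧ i.1.2 = j.1.2 :=
  Subtype.ext_iff.trans Prod.ext_iff

theorem fst_eq_snd_of_isMin {i : Intvl α} (h : IsMin i) : i.1.1 = i.1.2 := by
  let p : Intvl α := ⟨(i.1.1, i.1.1), le_rfl⟩
  have hle : p ≤ i := ⟨le_rfl, i.2⟩
  have hge := h hle
  exact le_antisymm i.2 hge.2

variable {M : Type*} [AddCommMonoid M] [LocallyFiniteOrder α]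

theorem sum_Icc [LocallyFiniteOrder (Intvl α)] (i j : Intvl α) (g : α → α → M) :
    ∑ k ∈ Icc i j, g k.1.1 k.1.2 = ∑ u ∈ Icc j.1.1 i.1.1, ∑ v ∈ Icc i.1.2 j.1.2, g u v := by
  rw [← sum_product']
  refine sum_nbij (·.1) (fun k hk => ?_) Subtype.val_injective.injOn (fun p hp => ?_)
    fun _ _ => rfl
  · obtain ⟨⟨h₁, h₂⟩, h₃, h₄⟩ := mem_Icc.1 hk
    exact mem_product.2 ⟨mem_Icc.2 ⟨h₃, h₁⟩, mem_Icc.2 ⟨h₂, h₄⟩⟩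
  · obtain ⟨⟨hu₁, hu₂⟩, hv₁, hv₂⟩ := And.imp mem_Icc.1 mem_Icc.1 (mem_product.1 hp)
    exact ⟨⟨p, hu₂.trans (i.2.trans hv₁)⟩, mem_Icc.2 ⟨⟨hu₂, hv₁⟩, hu₁, hv₂⟩, rfl⟩

theorem sum_filter_le [Fintype (Intvl α)] [DecidableLE (Intvl α)] (j : Intvl α) (g : α → α → M) :
    ∑ k with k ≤ j, g k.1.1 k.1.2 = ∑ u ∈ Icc j.1.1 j.1.2, ∑ v ∈ Icc u j.1.2, g u v := by
  rw [sum_sigma']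
  refine sum_nbij (fun k => ⟨k.1.1, k.1.2⟩) (fun k hk => ?_) (fun k _ l _ h => ?_)
    (fun p hp => ?_) fun _ _ => rfl
  · obtain ⟨h₁, h₂⟩ := (mem_filter.1 hk).2
    exact mem_sigma.2 ⟨mem_Icc.2 ⟨h₁, k.2.trans h₂⟩, mem_Icc.2 ⟨k.2, h₂⟩⟩
  · simp only [Sigma.mk.injEq, heq_eq_eq] at h
    exact Subtype.ext (Prod.ext h.1 h.2)
  · obtain ⟨u, v⟩ := p
    rw [mem_coe, mem_sigma, mem_Icc, mem_Icc] at hp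
    obtain ⟨⟨hu₁, -⟩, hv₁, hv₂⟩ := hp
    let k : Intvl α := ⟨(u, v), hv₁⟩
    have hk : k ≤ j := ⟨hu₁, hv₂⟩
    exact ⟨k, mem_filter.2 ⟨mem_univ _, hk⟩, rfl⟩

end Intvl

def Intvl.botRank (ρ : α → α → ℕ) : WithBot (Intvl α) → ℕ :=
  WithBot.recBotCoe 0 fun k => ρ k.1.1 k.1.2 + 1

@[simp]
theorem Intvl.botRank_bot (ρ : α → α → ℕ) : botRank ρ ⊥ = 0 := rfl

@[simp]
theorem Intvl.botRank_coe (ρ : α → α → ℕ) (k : Intvl α) : botRank ρ k = ρ k.1.1 k.1.2 + 1 := rfl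

section LocallyEulerian

variable [Finite α] {ρ : α → α → ℕ}

theorem rank_eq_add (hρ : ∀ x y : α, x ≤ y → IntervalGraded x y (ρ x y)) {x y z : α}
    (hxy : x ≤ y) (hyz : y ≤ z) : ρ x z = ρ x y + ρ y z :=
  (hρ x z (hxy.trans hyz)).eq_add (hρ x y hxy) (hρ y z hyz) hxy hyz

theorem Intvl.rank_covBy (hρ : ∀ x y : α, x ≤ y → IntervalGraded x y (ρ x y)) {i j : Intvl α}
    (h : i ⋖ j) : ρ j.1.1 j.1.2 = ρ i.1.1 i.1.2 + 1 := by
  rcases covBy_iff.1 h with ⟨hfst, hsnd⟩ | ⟨hsnd, hfst⟩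
  · rw [rank_eq_add hρ hfst.le (hsnd ▸ i.2), (hρ _ _ hfst.le).eq_one hfst, hsnd, add_comm]
  · rw [rank_eq_add hρ (hfst ▸ i.2) hsnd.le, (hρ _ _ hsnd.le).eq_one hsnd, hfst]

theorem Intvl.botRank_covBy (hρ : ∀ x y : α, x ≤ y → IntervalGraded x y (ρ x y))
    {X Y : WithBot (Intvl α)} (h : X ⋖ Y) : botRank ρ Y = botRank ρ X + 1 := by
  induction Y using WithBot.recBotCoe with
  | bot => exact absurd h.lt not_lt_bot
  | coe j =>
    induction X using WithBot.recBotCoe with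
    | bot =>
      rw [botRank_coe, botRank_bot, ← fst_eq_snd_of_isMin (WithBot.bot_covBy_coe.1 h),
        (hρ _ _ le_rfl).eq_zero]
    | coe i =>
      rw [botRank_coe, botRank_coe, rank_covBy hρ (WithBot.coe_covBy_coe.1 h)]

variable [LocallyFiniteOrder α] [DecidableEq α]

theorem sum_Icc_neg_one_pow_rank_right (hμ : ∀ x y : α, x ≤ y → pmu α x y = (-1) ^ ρ x y)
    (x y : α) : ∑ z ∈ Icc x y, (-1 : ℤ) ^ ρ x z = if x = y then 1 else 0 := by
  rw [← IncidenceAlgebra.sum_Icc_mu_right]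
  exact sum_congr rfl fun z hz => by rw [← hμ x z (mem_Icc.1 hz).1, pmu_eq_mu]

theorem sum_Icc_neg_one_pow_rank_left (hμ : ∀ x y : α, x ≤ y → pmu α x y = (-1) ^ ρ x y)
    (x y : α) : ∑ z ∈ Icc x y, (-1 : ℤ) ^ ρ z y = if x = y then 1 else 0 := by
  rw [← IncidenceAlgebra.sum_Icc_mu_left]
  exact sum_congr rfl fun z hz => by rw [← hμ z y (mem_Icc.1 hz).2, pmu_eq_mu]

theorem Intvl.sum_Icc_bot_coe_neg_one_pow [Fintype (Intvl α)] [DecidableLE (Intvl α)]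
    [LocallyFiniteOrder (WithBot (Intvl α))]
    (hμ : ∀ x y : α, x ≤ y → pmu α x y = (-1) ^ ρ x y) (j : Intvl α) :
    ∑ Z ∈ Icc ⊥ (j : WithBot (Intvl α)), (-1 : ℤ) ^ botRank ρ Z = 0 := by
  rw [WithBot.sum_Icc_bot_coe]
  simp only [botRank_coe, botRank_bot]
  rw [sum_filter_le j fun u v => (-1 : ℤ) ^ (ρ u v + 1)]
  simp only [pow_succ, mul_neg_one, sum_neg_distrib, sum_Icc_neg_one_pow_rank_right hμ,
    sum_ite_eq', mem_Icc, le_rfl, j.2, and_self, if_true, pow_zero, add_neg_cancel]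

theorem Intvl.sum_Icc_coe_neg_one_pow [LocallyFiniteOrder (Intvl α)] [DecidableEq (Intvl α)]
    [LocallyFiniteOrder (WithBot (Intvl α))] (hρ : ∀ x y : α, x ≤ y → IntervalGraded x y (ρ x y))
    (hμ : ∀ x y : α, x ≤ y → pmu α x y = (-1) ^ ρ x y) (i j : Intvl α) :
    ∑ Z ∈ Icc (i : WithBot (Intvl α)) j, (-1 : ℤ) ^ (botRank ρ Z - botRank ρ i) =
      if i = j then 1 else 0 := by
  rw [WithBot.sum_Icc_coe_coe]
  simp only [botRank_coe]
  have hsplit : ∀ u ∈ Icc j.1.1 i.1.1, ∀ v ∈ Icc i.1.2 j.1.2,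
      (-1 : ℤ) ^ (ρ u v + 1 - (ρ i.1.1 i.1.2 + 1)) = (-1) ^ ρ u i.1.1 * (-1) ^ ρ i.1.2 v := by
    intro u hu v hv
    rw [← pow_add, rank_eq_add hρ (mem_Icc.1 hu).2 (i.2.trans (mem_Icc.1 hv).1),
      rank_eq_add hρ i.2 (mem_Icc.1 hv).1]
    congr 1
    omega
  rw [sum_Icc i j fun u v => (-1 : ℤ) ^ (ρ u v + 1 - (ρ i.1.1 i.1.2 + 1)),
    sum_congr rfl fun u hu => sum_congr rfl (hsplit u hu), ← sum_mul_sum,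
    sum_Icc_neg_one_pow_rank_left hμ, sum_Icc_neg_one_pow_rank_right hμ, ite_zero_mul_ite_zero,
    one_mul]
  exact if_congr (by rw [eq_comm, ext_iff]) rfl rfl

end LocallyEulerian

theorem Intvl.pmu_withBot [Finite α] {ρ : α → α → ℕ}
    (hρ : ∀ x y : α, x ≤ y → IntervalGraded x y (ρ x y))
    (hμ : ∀ x y : α, x ≤ y → pmu α x y = (-1) ^ ρ x y) {X Y : WithBot (Intvl α)} (hXY : X ≤ Y) :
    pmu (WithBot (Intvl α)) X Y = (-1) ^ (botRank ρ Y - botRank ρ X) := by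
  classical
  let _ : Fintype α := Fintype.ofFinite α
  let _ : LocallyFiniteOrder α := Fintype.toLocallyFiniteOrder
  let _ : Fintype (Intvl α) := Fintype.ofFinite _
  let _ : LocallyFiniteOrder (Intvl α) := Fintype.toLocallyFiniteOrder
  let _ : LocallyFiniteOrder (WithBot (Intvl α)) := Fintype.toLocallyFiniteOrder
  refine pmu_eq_of_sum_Icc (fun X Y => (-1) ^ (botRank ρ Y - botRank ρ X))
    (fun A B hAB => ?_) hXY
  induction B using WithBot.recBotCoe with
  | bot => rw [le_bot_iff.1 hAB, Icc_self, sum_singleton, Nat.sub_self, pow_zero, if_pos rfl]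
  | coe j =>
    induction A using WithBot.recBotCoe with
    | bot => simpa using sum_Icc_bot_coe_neg_one_pow hμ j
    | coe i => simpa using sum_Icc_coe_neg_one_pow hρ hμ i j

/-- If `P` is a finite locally Eulerian poset, then the poset obtained from
`Int(P)` by adjoining a minimum element is lower Eulerian. -/
theorem stmt3 (α : Type*) [PartialOrder α] [Fintype α]
    (ρ : α → α → ℕ)
    (hLE : ∀ x y : α, x ≤ y → IntervalGraded x y (ρ x y) ∧ pmu α x y = (-1) ^ ρ x y) :
    ∃ ρ' : WithBot (Intvl α) → WithBot (Intvl α) → ℕ,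
      LowerEulerianWith (WithBot (Intvl α)) ρ' := by
  have hρ x y hxy := (hLE x y hxy).1
  have hμ x y hxy := (hLE x y hxy).2
  exact ⟨fun X Y => Intvl.botRank ρ Y - Intvl.botRank ρ X, fun X Y hXY =>
    ⟨IntervalGraded.of_covBy _ (fun _ _ => Intvl.botRank_covBy hρ) hXY,
      Intvl.pmu_withBot hρ hμ hXY⟩⟩
end

section
/- For every finite poset P, the order complex of Int(P), the poset of nonempty closed intervals of P ordered by inclusion, is homeomorphic to the order complex of P. -/
open Finset

variable {α : Type*} [PartialOrder α]

open scoped Classical in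
/-- The order complex of the subposet `S`: the collection of finite chains contained in `S`. -/
noncomputable def chainsIn {α : Type*} [PartialOrder α] [Fintype α] (S : Set α) :
    Finset (Finset α) :=
  Finset.univ.filter fun s => ↑s ⊆ S ∧ IsChain (· ≤ ·) (s : Set α)

/-- The reduced Euler characteristic of a finite simplicial complex
(`χ̃ = Σ_{σ ∈ K} (-1)^{|σ|-1}`, the empty face contributing `-1`). -/
def redEuler {V : Type*} (K : Finset (Finset V)) : ℤ :=
  -∑ s ∈ K, (-1 : ℤ) ^ s.card

/-- The geometric realization of a finite simplicial complex `K`, as the space of convex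
weightings supported on faces of `K`, topologized as a subspace of `V → ℝ`. -/
def realiz {V : Type*} [Fintype V] (K : Finset (Finset V)) : Type _ :=
  {f : V → ℝ // (∃ s ∈ K, ∀ v, f v ≠ 0 → v ∈ s) ∧ (∀ v, 0 ≤ f v) ∧ ∑ v, f v = 1}

instance {V : Type*} [Fintype V] (K : Finset (Finset V)) : TopologicalSpace (realiz K) :=
  instTopologicalSpaceSubtype

/-!
Send the vertex `[x, y]` of `Δ(Int P)` to the midpoint of the edge `{x, y}` of `Δ(P)` and extend
linearly over each simplex. This is a bijection between the geometric realizations: a point of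
`Δ(P)` is a weighting of a chain `x₁ < ⋯ < xₙ`, and the largest interval of any preimage must
be `[x₁, xₙ]`, carrying twice the smaller of the weights at `x₁` and `xₙ`. Peeling that interval
off strictly shrinks the support, so induction on its size shows both that the preimage is
unique and that it exists. A continuous bijection from a compact space to a Hausdorff space is
a homeomorphism.
-/

section ChainCone

variable {β : Type*} [PartialOrder β]

/-- The cone over the order complex of `β`. -/
def chainCone (β : Type*) [PartialOrder β] : Set (β → ℝ) :=
  {f | 0 ≤ f ∧ IsChain (· ≤ ·) (Function.support f)}

theorem zero_mem_chainCone : (0 : β → ℝ) ∈ chainCone β :=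
  ⟨le_rfl, by simp [IsChain]⟩

theorem IsChain.exists_isGreatest_of_finite {s : Set β} (hc : IsChain (· ≤ ·) s)
    (hfin : s.Finite) (hne : s.Nonempty) : ∃ b, IsGreatest s b := by
  obtain ⟨b, hb⟩ := hfin.exists_maximal hne
  exact ⟨b, hb.1, fun x hx => (hc.total hb.1 hx).elim (hb.2 hx) id⟩

theorem IsChain.exists_isLeast_of_finite {s : Set β} (hc : IsChain (· ≤ ·) s)
    (hfin : s.Finite) (hne : s.Nonempty) : ∃ a, IsLeast s a := by
  obtain ⟨a, ha⟩ := hfin.exists_minimal hne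
  exact ⟨a, ha.1, fun x hx => (hc.total ha.1 hx).elim id (ha.2 hx)⟩

theorem update_zero_mem_chainCone [DecidableEq β] {f : β → ℝ} (hf : f ∈ chainCone β) (b : β) :
    Function.update f b 0 ∈ chainCone β := by
  refine ⟨fun x => ?_, hf.2.mono ?_⟩
  · rcases eq_or_ne x b with rfl | hx
    · simp
    · simpa [hx] using hf.1 x
  · rw [Function.support_update_zero]
    exact Set.sdiff_subset

theorem exists_mem_chainsIn_univ_iff [Fintype β] {f : β → ℝ} :
    (∃ s ∈ chainsIn (Set.univ : Set β), ∀ v, f v ≠ 0 → v ∈ s) ↔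
      IsChain (· ≤ ·) (Function.support f) := by
  classical
  constructor
  · rintro ⟨s, hs, hsub⟩
    exact (Finset.mem_filter.mp hs).2.2.mono fun v hv => hsub v hv
  · intro h
    refine ⟨(Function.support f).toFinset, ?_, fun v hv => by simpa using hv⟩
    simpa [chainsIn] using h

theorem realiz_chainsIn_univ_iff [Fintype β] {f : β → ℝ} :
    ((∃ s ∈ chainsIn (Set.univ : Set β), ∀ v, f v ≠ 0 → v ∈ s) ∧ (∀ v, 0 ≤ f v) ∧
      ∑ v, f v = 1) ↔ f ∈ chainCone β ∧ ∑ v, f v = 1 := by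
  rw [exists_mem_chainsIn_univ_iff, chainCone, Set.mem_ofPred_eq, Pi.le_def]
  simp only [Pi.zero_apply]
  tauto

theorem single_mem_chainCone [DecidableEq β] {b : β} {c : ℝ} (hc : 0 ≤ c) :
    Pi.single b c ∈ chainCone β :=
  ⟨Pi.single_nonneg.mpr hc, (Set.subsingleton_singleton.anti Pi.support_single_subset).isChain⟩

theorem add_single_mem_chainCone [DecidableEq β] {f : β → ℝ} (hf : f ∈ chainCone β) {b : β}
    {c : ℝ} (hc : 0 ≤ c) (hb : ∀ x ∈ Function.support f, x ≤ b) :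
    f + Pi.single b c ∈ chainCone β := by
  refine ⟨add_nonneg hf.1 (Pi.single_nonneg.mpr hc), ?_⟩
  refine (hf.2.insert fun x hx _ => Or.inr (hb x hx)).mono fun x hx => ?_
  rcases eq_or_ne x b with rfl | hxb
  · exact Set.mem_insert _ _
  · exact Set.mem_insert_of_mem _ (by simpa [hxb] using hx)

theorem eq_single_of_isLeast_of_isGreatest {g : β → ℝ} [DecidableEq β] {a : β}
    (ha : IsLeast (Function.support g) a) (ha' : IsGreatest (Function.support g) a) :
    g = Pi.single a (g a) := by
  ext v
  rcases eq_or_ne v a with rfl | hva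
  · simp
  · rw [Pi.single_eq_of_ne hva]
    by_contra hv
    exact hva (le_antisymm (ha'.2 hv) (ha.2 hv))

theorem sub_single_min_mem_chainCone [DecidableEq β] {g : β → ℝ} (hg : g ∈ chainCone β) {a b : β}
    (hab : a ≠ b) (ha : a ∈ Function.support g) (hb : b ∈ Function.support g) :
    g - Pi.single a (min (g a) (g b)) - Pi.single b (min (g a) (g b)) ∈ chainCone β ∧
      Function.support (g - Pi.single a (min (g a) (g b)) - Pi.single b (min (g a) (g b))) ⊂
        Function.support g := by
  set g' := g - Pi.single a (min (g a) (g b)) - Pi.single b (min (g a) (g b))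
  have hg' (v : β) : g' v = if v = a then g a - min (g a) (g b)
      else if v = b then g b - min (g a) (g b) else g v := by
    rcases eq_or_ne v a with rfl | hva
    · simp [g', hab]
    · rcases eq_or_ne v b with rfl | hvb <;> simp [g', *]
  have hsupp : Function.support g' ⊆ Function.support g := fun v hv => by
    rw [Function.mem_support, hg'] at hv
    split_ifs at hv with hva hvb
    · exact hva ▸ ha
    · exact hvb ▸ hb
    · exact hv
  refine ⟨⟨fun v => ?_, hg.2.mono hsupp⟩, (Set.ssubset_iff_of_subset hsupp).mpr ?_⟩
  · rw [Pi.zero_apply, hg']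
    split_ifs
    · exact sub_nonneg.mpr (min_le_left _ _)
    · exact sub_nonneg.mpr (min_le_right _ _)
    · exact hg.1 v
  · rcases le_total (g a) (g b) with h | h
    · exact ⟨a, ha, by simp [hg', min_eq_left h]⟩
    · exact ⟨b, hb, by simp [hg', min_eq_right h, hab.symm]⟩

end ChainCone

section Realization

theorem isClosed_setOf_support_subset {V : Type*} (s : Finset V) :
    IsClosed {f : V → ℝ | ∀ v, f v ≠ 0 → v ∈ s} := by
  simp only [Set.ofPred_forall]
  refine isClosed_iInter fun v => ?_
  by_cases hv : v ∈ s
  · simp [hv]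
  · simpa [hv] using isClosed_eq (continuous_apply v) continuous_const

variable {V : Type*} [Fintype V]

instance (K : Finset (Finset V)) : CompactSpace (realiz K) := by
  have hclosed : IsClosed {f : V → ℝ | ∃ s ∈ K, ∀ v, f v ≠ 0 → v ∈ s} := by
    convert isClosed_biUnion_finset fun s (_ : s ∈ K) => isClosed_setOf_support_subset s
    ext; simp
  exact isCompact_iff_compactSpace.mp ((isCompact_stdSimplex ℝ V).inter_left hclosed)

instance (K : Finset (Finset V)) : T2Space (realiz K) :=
  inferInstanceAs (T2Space (Subtype _))

noncomputable def realizChainsHomeomorph {P Q : Type*} [PartialOrder P] [Fintype P]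
    [PartialOrder Q] [Fintype Q] (Φ : (P → ℝ) →ₗ[ℝ] Q → ℝ)
    (hΦ : Set.BijOn Φ (chainCone P) (chainCone Q)) (hsum : ∀ f, ∑ q, Φ f q = ∑ p, f p) :
    realiz (chainsIn (Set.univ : Set P)) ≃ₜ realiz (chainsIn (Set.univ : Set Q)) :=
  have hmaps (F : realiz (chainsIn (Set.univ : Set P))) :
      (∃ s ∈ chainsIn (Set.univ : Set Q), ∀ v, Φ F.1 v ≠ 0 → v ∈ s) ∧ (∀ v, 0 ≤ Φ F.1 v) ∧
        ∑ v, Φ F.1 v = 1 := by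
    obtain ⟨hF, hF1⟩ := realiz_chainsIn_univ_iff.mp F.2
    exact realiz_chainsIn_univ_iff.mpr ⟨hΦ.mapsTo hF, (hsum _).trans hF1⟩
  let e : realiz (chainsIn (Set.univ : Set P)) ≃ realiz (chainsIn (Set.univ : Set Q)) :=
    Equiv.ofBijective (fun F => ⟨Φ F.1, hmaps F⟩) <| by
      refine ⟨fun F G hFG => Subtype.ext <| hΦ.injOn (realiz_chainsIn_univ_iff.mp F.2).1
        (realiz_chainsIn_univ_iff.mp G.2).1 (congrArg Subtype.val hFG), fun G => ?_⟩
      obtain ⟨hG, hG1⟩ := realiz_chainsIn_univ_iff.mp G.2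
      obtain ⟨f, hf, hfG⟩ := hΦ.surjOn hG
      refine ⟨⟨f, realiz_chainsIn_univ_iff.mpr ⟨hf, ?_⟩⟩, Subtype.ext hfG⟩
      rw [← hsum, hfG, hG1]
  (show Continuous e from
    (Φ.continuous_of_finiteDimensional.comp continuous_subtype_val).subtype_mk _)
    |>.homeoOfEquivCompactToT2

end Realization

namespace Intvl

open scoped Classical

variable {α : Type*} [PartialOrder α]

theorem ext {I J : Intvl α} (h₁ : I.1.1 = J.1.1) (h₂ : I.1.2 = J.1.2) : I = J :=
  Subtype.ext (Prod.ext h₁ h₂)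

def ofLE {a b : α} (h : a ≤ b) : Intvl α := ⟨(a, b), h⟩

theorem mem_Icc_of_le {I J : Intvl α} (h : I ≤ J) {v : α} (hv : v = I.1.1 ∨ v = I.1.2) :
    v ∈ Set.Icc J.1.1 J.1.2 := by
  rcases hv with rfl | rfl
  · exact ⟨h.1, I.2.trans h.2⟩
  · exact ⟨h.1.trans I.2, h.2⟩

theorem endpoints_comparable {I J : Intvl α} (h : I ≤ J) {v w : α} (hv : v = I.1.1 ∨ v = I.1.2)
    (hw : w = J.1.1 ∨ w = J.1.2) : v ≤ w ∨ w ≤ v := by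
  have hv' := mem_Icc_of_le h hv
  rcases hw with rfl | rfl
  · exact Or.inr hv'.1
  · exact Or.inl hv'.2

noncomputable def midpoint (I : Intvl α) : α → ℝ :=
  Pi.single I.1.1 2⁻¹ + Pi.single I.1.2 2⁻¹

theorem midpoint_apply (I : Intvl α) (v : α) :
    I.midpoint v = (if v = I.1.1 then 2⁻¹ else 0) + (if v = I.1.2 then 2⁻¹ else 0) := by
  simp [midpoint, Pi.single_apply]

theorem midpoint_nonneg (I : Intvl α) : 0 ≤ I.midpoint := fun v => by
  rw [midpoint_apply]; positivity

theorem midpoint_ne_zero_iff {I : Intvl α} {v : α} :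
    I.midpoint v ≠ 0 ↔ v = I.1.1 ∨ v = I.1.2 := by
  rw [midpoint_apply]; split_ifs <;> norm_num [*]

theorem midpoint_fst_eq_snd (I : Intvl α) : I.midpoint I.1.1 = I.midpoint I.1.2 := by
  by_cases h : I.1.1 = I.1.2
  · rw [h]
  · simp [midpoint_apply, h, Ne.symm h]

theorem midpoint_fst_pos (I : Intvl α) : 0 < I.midpoint I.1.1 :=
  (midpoint_nonneg I _).lt_of_ne' (midpoint_ne_zero_iff.mpr (Or.inl rfl))

theorem sum_midpoint [Fintype α] (I : Intvl α) : ∑ v, I.midpoint v = 1 := by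
  norm_num [midpoint, Finset.sum_add_distrib, Finset.sum_pi_single']

theorem midpoint_ofLE_refl (a : α) : (ofLE (le_refl a)).midpoint = Pi.single a 1 := by
  simp only [midpoint, ofLE, ← Pi.single_add]; norm_num

theorem smul_midpoint_ofLE {a b : α} (hab : a ≤ b) (c : ℝ) :
    (2 * c) • (ofLE hab).midpoint = Pi.single a c + Pi.single b c := by
  simp only [midpoint, ofLE, smul_add, ← Pi.single_smul, smul_eq_mul]
  congr 2 <;> ring

theorem fst_eq_of_le_of_midpoint_ne_zero {J M : Intvl α} (h : J ≤ M) (hJ : J.midpoint M.1.1 ≠ 0) :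
    J.1.1 = M.1.1 :=
  le_antisymm ((midpoint_ne_zero_iff.mp hJ).elim (·.ge) (· ▸ J.2)) h.1

theorem snd_eq_of_le_of_midpoint_ne_zero {J M : Intvl α} (h : J ≤ M) (hJ : J.midpoint M.1.2 ≠ 0) :
    J.1.2 = M.1.2 :=
  le_antisymm h.2 ((midpoint_ne_zero_iff.mp hJ).elim (· ▸ J.2) (·.le))

variable [Fintype (Intvl α)]

noncomputable def midpointMap : (Intvl α → ℝ) →ₗ[ℝ] α → ℝ :=
  Fintype.linearCombination ℝ midpoint

theorem midpointMap_apply (f : Intvl α → ℝ) (v : α) :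
    midpointMap f v = ∑ I, f I * I.midpoint v := by
  simp [midpointMap, Fintype.linearCombination_apply, Finset.sum_apply]

theorem midpointMap_single (I : Intvl α) (c : ℝ) : midpointMap (Pi.single I c) = c • I.midpoint :=
  Fintype.linearCombination_apply_single ℝ midpoint I c

theorem midpointMap_update_zero (f : Intvl α → ℝ) (I : Intvl α) :
    midpointMap (Function.update f I 0) = midpointMap f - f I • I.midpoint := by
  simp [Pi.update_eq_sub_add_single, midpointMap_single]

theorem sum_midpointMap [Fintype α] (f : Intvl α → ℝ) : ∑ v, midpointMap f v = ∑ I, f I := by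
  simp_rw [midpointMap_apply]
  rw [Finset.sum_comm]
  simp [← Finset.mul_sum, sum_midpoint]

variable {f f' : Intvl α → ℝ} {M : Intvl α}

theorem mul_midpoint_le_midpointMap (hf : 0 ≤ f) (I : Intvl α) (v : α) :
    f I * I.midpoint v ≤ midpointMap f v := by
  rw [midpointMap_apply]
  exact Finset.single_le_sum (fun J _ => mul_nonneg (hf J) (midpoint_nonneg J v))
    (Finset.mem_univ I)

theorem midpointMap_ne_zero_iff (hf : 0 ≤ f) {v : α} :
    midpointMap f v ≠ 0 ↔ ∃ I, f I ≠ 0 ∧ (v = I.1.1 ∨ v = I.1.2) := by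
  rw [midpointMap_apply, Ne, Finset.sum_eq_zero_iff_of_nonneg
    fun J _ => mul_nonneg (hf J) (midpoint_nonneg J v)]
  simp [midpoint_ne_zero_iff]

theorem midpointMap_eq_zero_iff (hf : 0 ≤ f) : midpointMap f = 0 ↔ f = 0 := by
  refine ⟨fun h => funext fun I => ?_, fun h => h ▸ map_zero _⟩
  by_contra hI
  exact (midpointMap_ne_zero_iff hf).mpr ⟨I, hI, Or.inl rfl⟩ (congrFun h I.1.1)

theorem midpointMap_mem_chainCone (hf : f ∈ chainCone (Intvl α)) :
    midpointMap f ∈ chainCone α := by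
  refine ⟨fun v => (midpointMap_apply f v).symm ▸
    Finset.sum_nonneg fun I _ => mul_nonneg (hf.1 I) (midpoint_nonneg I v), ?_⟩
  intro v hv w hw _
  obtain ⟨I, hI, hvI⟩ := (midpointMap_ne_zero_iff hf.1).mp hv
  obtain ⟨J, hJ, hwJ⟩ := (midpointMap_ne_zero_iff hf.1).mp hw
  rcases hf.2.total hI hJ with hIJ | hJI
  · exact endpoints_comparable hIJ hvI hwJ
  · exact (endpoints_comparable hJI hwJ hvI).symm

theorem support_midpointMap_subset_Icc (hf : 0 ≤ f) (hM : IsGreatest (Function.support f) M) :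
    Function.support (midpointMap f) ⊆ Set.Icc M.1.1 M.1.2 := fun v hv => by
  obtain ⟨I, hI, hvI⟩ := (midpointMap_ne_zero_iff hf).mp hv
  exact mem_Icc_of_le (hM.2 hI) hvI

theorem isLeast_support_midpointMap (hf : 0 ≤ f) (hM : IsGreatest (Function.support f) M) :
    IsLeast (Function.support (midpointMap f)) M.1.1 :=
  ⟨(midpointMap_ne_zero_iff hf).mpr ⟨M, hM.1, Or.inl rfl⟩,
    fun _ hv => (support_midpointMap_subset_Icc hf hM hv).1⟩

theorem isGreatest_support_midpointMap (hf : 0 ≤ f) (hM : IsGreatest (Function.support f) M) :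
    IsGreatest (Function.support (midpointMap f)) M.1.2 :=
  ⟨(midpointMap_ne_zero_iff hf).mpr ⟨M, hM.1, Or.inr rfl⟩,
    fun _ hv => (support_midpointMap_subset_Icc hf hM hv).2⟩

theorem eq_of_isGreatest_support_of_midpointMap_eq (hf : 0 ≤ f) (hf' : 0 ≤ f')
    (h : midpointMap f = midpointMap f') {M' : Intvl α} (hM : IsGreatest (Function.support f) M)
    (hM' : IsGreatest (Function.support f') M') : M = M' :=
  ext ((isLeast_support_midpointMap hf hM).unique (h ▸ isLeast_support_midpointMap hf' hM'))
    ((isGreatest_support_midpointMap hf hM).unique (h ▸ isGreatest_support_midpointMap hf' hM'))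

theorem midpointMap_eq_mul_midpoint {v : α} (hv : ∀ J ≠ M, f J = 0 ∨ J.midpoint v = 0) :
    midpointMap f v = f M * M.midpoint v := by
  rw [midpointMap_apply]
  refine Finset.sum_eq_single M (fun J _ hJ => ?_) (by simp)
  rcases hv J hJ with h | h <;> simp [h]

/-- Intervals below `M` sharing its left and its right endpoint respectively are comparable
only if one of them is `M`. -/
theorem top_endpoint_untouched (hf : f ∈ chainCone (Intvl α))
    (hM : IsGreatest (Function.support f) M) :
    (∀ J ≠ M, f J = 0 ∨ J.midpoint M.1.1 = 0) ∨ (∀ J ≠ M, f J = 0 ∨ J.midpoint M.1.2 = 0) := by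
  by_contra! h
  obtain ⟨⟨J, hJM, hJ, hJ₁⟩, K, hKM, hK, hK₂⟩ := h
  have hJ₁' := fst_eq_of_le_of_midpoint_ne_zero (hM.2 hJ) hJ₁
  have hK₂' := snd_eq_of_le_of_midpoint_ne_zero (hM.2 hK) hK₂
  rcases hf.2.total hJ hK with hJK | hKJ
  · exact hKM (ext (le_antisymm (hJ₁' ▸ hJK.1) (hM.2 hK).1) hK₂')
  · exact hJM (ext hJ₁' (le_antisymm (hM.2 hJ).2 (hK₂' ▸ hKJ.2)))

theorem mul_midpoint_fst_eq_min (hf : f ∈ chainCone (Intvl α))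
    (hM : IsGreatest (Function.support f) M) :
    f M * M.midpoint M.1.1 = min (midpointMap f M.1.1) (midpointMap f M.1.2) := by
  have h₁ := mul_midpoint_le_midpointMap hf.1 M M.1.1
  have h₂ := mul_midpoint_le_midpointMap hf.1 M M.1.2
  rw [← midpoint_fst_eq_snd] at h₂
  rcases top_endpoint_untouched hf hM with h | h
  · rw [midpointMap_eq_mul_midpoint h] at h₁ ⊢
    exact (min_eq_left h₂).symm
  · rw [midpointMap_eq_mul_midpoint h, ← midpoint_fst_eq_snd]
    exact (min_eq_right h₁).symm

theorem injOn_midpointMap : Set.InjOn midpointMap (chainCone (Intvl α)) := by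
  intro f hf f' hf' h
  induction hn : (Function.support f).ncard using Nat.strong_induction_on generalizing f f' with
  | _ n ih =>
  rcases eq_or_ne f 0 with rfl | hne
  · rw [map_zero, eq_comm, midpointMap_eq_zero_iff hf'.1] at h
    exact h.symm
  have hne' : f' ≠ 0 := fun h0 =>
    hne ((midpointMap_eq_zero_iff hf.1).mp (h.trans (h0 ▸ map_zero _)))
  obtain ⟨M, hM⟩ := hf.2.exists_isGreatest_of_finite (Set.toFinite _)
    (Function.support_nonempty_iff.mpr hne)
  obtain ⟨M', hM'⟩ := hf'.2.exists_isGreatest_of_finite (Set.toFinite _)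
    (Function.support_nonempty_iff.mpr hne')
  obtain rfl := eq_of_isGreatest_support_of_midpointMap_eq hf'.1 hf.1 h.symm hM' hM
  have hfM : f M' = f' M' := mul_right_cancel₀ (midpoint_fst_pos M').ne' <|
    (mul_midpoint_fst_eq_min hf hM).trans (h ▸ (mul_midpoint_fst_eq_min hf' hM').symm)
  have hupd : Function.update f M' 0 = Function.update f' M' 0 := by
    refine ih _ (hn ▸ ?_) (update_zero_mem_chainCone hf M') (update_zero_mem_chainCone hf' M')
      (by rw [midpointMap_update_zero, midpointMap_update_zero, h, hfM]) rfl
    rw [Function.support_update_zero]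
    exact Set.ncard_sdiff_singleton_lt_of_mem hM.1
  calc f = Function.update (Function.update f M' 0) M' (f M') := by simp
    _ = f' := by rw [hupd, hfM]; simp

theorem le_of_support_midpointMap_subset_Icc (hf : 0 ≤ f) {a b : α} (hab : a ≤ b)
    (h : Function.support (midpointMap f) ⊆ Set.Icc a b) {J : Intvl α}
    (hJ : J ∈ Function.support f) : J ≤ ofLE hab :=
  ⟨(h ((midpointMap_ne_zero_iff hf).mpr ⟨J, hJ, Or.inl rfl⟩)).1,
    (h ((midpointMap_ne_zero_iff hf).mpr ⟨J, hJ, Or.inr rfl⟩)).2⟩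

theorem surjOn_midpointMap [Finite α] :
    Set.SurjOn midpointMap (chainCone (Intvl α)) (chainCone α) := by
  intro g hg
  induction hn : (Function.support g).ncard using Nat.strong_induction_on generalizing g with
  | _ n ih =>
  rcases eq_or_ne g 0 with rfl | hne
  · exact ⟨0, zero_mem_chainCone, map_zero _⟩
  obtain ⟨a, ha⟩ := hg.2.exists_isLeast_of_finite (Set.toFinite _)
    (Function.support_nonempty_iff.mpr hne)
  obtain ⟨b, hb⟩ := hg.2.exists_isGreatest_of_finite (Set.toFinite _)
    (Function.support_nonempty_iff.mpr hne)
  rcases eq_or_ne a b with rfl | hab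
  · refine ⟨Pi.single (ofLE (le_refl a)) (g a), single_mem_chainCone (hg.1 a), ?_⟩
    rw [midpointMap_single, midpoint_ofLE_refl, ← Pi.single_smul, smul_eq_mul, mul_one,
      ← eq_single_of_isLeast_of_isGreatest ha hb]
  obtain ⟨hg', hg'g⟩ := sub_single_min_mem_chainCone hg hab ha.1 hb.1
  obtain ⟨f, hf, hfg⟩ := ih _ (hn ▸ Set.ncard_lt_ncard hg'g) hg' rfl
  have hle : a ≤ b := ha.2 hb.1
  refine ⟨f + Pi.single (ofLE hle) (2 * min (g a) (g b)),
    add_single_mem_chainCone hf ?_ fun J hJ => ?_, ?_⟩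
  · exact mul_nonneg zero_le_two (le_min (hg.1 a) (hg.1 b))
  · refine le_of_support_midpointMap_subset_Icc hf.1 hle (fun v hv => ?_) hJ
    rw [hfg] at hv
    exact ⟨ha.2 (hg'g.subset hv), hb.2 (hg'g.subset hv)⟩
  · rw [map_add, midpointMap_single, smul_midpoint_ofLE, hfg]
    abel

end Intvl

open scoped Classical in
/-- For every finite poset `P`, the order complex of `Int(P)` is
homeomorphic to the order complex of `P`. -/
theorem stmt4 (α : Type*) [PartialOrder α] [Fintype α] :
    letI := Fintype.ofFinite (Intvl α)
    Nonempty (realiz (chainsIn (Set.univ : Set (Intvl α))) ≃ₜ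
      realiz (chainsIn (Set.univ : Set α))) :=
  letI := Fintype.ofFinite (Intvl α)
  ⟨realizChainsHomeomorph Intvl.midpointMap
    ⟨fun _ => Intvl.midpointMap_mem_chainCone, Intvl.injOn_midpointMap,
      Intvl.surjOn_midpointMap⟩
    Intvl.sum_midpointMap⟩
end

section
/- Every Eulerian lattice of rank d has at least d atoms. More generally, every finite graded lattice of rank d whose Möbius function is nowhere zero has at least d atoms. -/
/-!
By the dual form of Weisner's theorem, in a finite lattice
`∑_{z ≤ t, z ⊓ s = ⊥} μ(z, t) = 0` whenever `¬ t ≤ s`. If `s` is the join of the atoms below `t`,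
the only such `z` is `⊥`, so `μ(⊥, t) ≠ 0` forces `t` to be the join of the atoms below it.
Hence along a maximal chain `⊥ = t₀ ⋖ t₁ ⋖ ⋯ ⋖ t_d = ⊤` each step adds an atom below `tᵢ` that is
not below `tᵢ₋₁`, and there are at least `d` atoms.
-/

open Finset

variable {α : Type*} [PartialOrder α]

namespace IsMaxChainIn

variable {S : Set α} {m : Finset α}

lemma mem_of_forall_comparable (hm : IsMaxChainIn S m) {z : α} (hzS : z ∈ S)
    (hz : ∀ b ∈ m, z ≤ b ∨ b ≤ z) : z ∈ m := by
  classical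
  have hS : ↑(insert z m) ⊆ S := by
    rw [Finset.coe_insert]; exact Set.insert_subset hzS hm.1
  have hchain : IsChain (· ≤ ·) (↑(insert z m) : Set α) := by
    rw [Finset.coe_insert]; exact hm.2.1.insert fun b hb _ => hz b hb
  rw [hm.2.2 _ hS hchain (subset_insert z m)]
  exact mem_insert_self z m

lemma insert_of_covBy [DecidableEq α] {x c t : α} (hm : IsMaxChainIn (Set.Icc x c) m)
    (hxc : x ≤ c) (hct : c ⋖ t) : IsMaxChainIn (Set.Icc x t) (insert t m) := by
  have hcm : c ∈ m := hm.mem_of_forall_comparable ⟨hxc, le_rfl⟩ fun b hb => Or.inr (hm.1 hb).2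
  refine ⟨?_, ?_, fun m' hm'S hm'chain hsub => subset_antisymm hsub fun z hz => ?_⟩
  · rw [Finset.coe_insert]
    exact Set.insert_subset ⟨hxc.trans hct.le, le_rfl⟩
      fun b hb => ⟨(hm.1 hb).1, (hm.1 hb).2.trans hct.le⟩
  · rw [Finset.coe_insert]
    exact hm.2.1.insert fun b hb _ => Or.inr ((hm.1 hb).2.trans hct.le)
  rcases hm'chain.total hz (hsub (mem_insert_of_mem hcm)) with hzc | hcz
  · exact mem_insert_of_mem <| hm.mem_of_forall_comparable ⟨(hm'S hz).1, hzc⟩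
      fun b hb => hm'chain.total hz (hsub (mem_insert_of_mem hb))
  · rcases hct.eq_or_eq hcz (hm'S hz).2 with rfl | rfl
    · exact mem_insert_of_mem hcm
    · exact mem_insert_self z m

end IsMaxChainIn

namespace IntervalGraded

variable {x t : α} {r : ℕ}

lemma ne_of_succ (h : IntervalGraded x t (r + 1)) : x ≠ t := by
  rintro rfl
  have hx : IsMaxChainIn (Set.Icc x x) {x} :=
    ⟨by simp, by simp, fun m' hm'S _ hsub =>
      subset_antisymm hsub fun z hz => by simpa using hm'S hz⟩
  simpa using h {x} hx

lemma of_covBy_s15 {c : α} (h : IntervalGraded x t (r + 1)) (hxc : x ≤ c) (hct : c ⋖ t) :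
    IntervalGraded x c r := by
  classical
  intro m hm
  have htm : t ∉ m := fun htm => hct.lt.not_ge (hm.1 htm).2
  have := h _ (hm.insert_of_covBy hxc hct)
  rw [card_insert_of_notMem htm] at this
  omega

end IntervalGraded

lemma GradedRank.intervalGraded_bot_top [BoundedOrder α] {d : ℕ}
    (h : GradedRank (Set.univ : Set α) d) : IntervalGraded (⊥ : α) ⊤ d :=
  fun m hm => h m ⟨Set.subset_univ _, hm.2.1,
    fun m' _ hm'chain hsub => hm.2.2 m' (fun _ _ => ⟨bot_le, le_top⟩) hm'chain hsub⟩

lemma pmu_eq_mu_s15 {P : Type*} [PartialOrder P] [Finite P] [DecidableEq P] [LocallyFiniteOrder P]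
    (x y : P) : pmu P x y = IncidenceAlgebra.mu ℤ x y := by
  unfold pmu
  congr!
  exact Subsingleton.elim _ _

open IncidenceAlgebra in
lemma sum_mu_inf_eq_bot {𝕜 L : Type*} [Ring 𝕜] [Lattice L] [OrderBot L] [LocallyFiniteOrder L]
    [DecidableEq L] {a t : L} (h : ¬ t ≤ a) :
    ∑ z ∈ Icc ⊥ t with z ⊓ a = ⊥, mu 𝕜 z t = 0 := by
  calc ∑ z ∈ Icc ⊥ t with z ⊓ a = ⊥, mu 𝕜 z t
      = ∑ z ∈ Icc ⊥ t, ∑ y ∈ Icc ⊥ (z ⊓ a), mu 𝕜 ⊥ y * mu 𝕜 z t := by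
        rw [sum_filter]
        refine sum_congr rfl fun z _ => ?_
        rw [← sum_mul, sum_Icc_mu_right]
        simp [ite_mul, @eq_comm _ ⊥]
    _ = ∑ y ∈ Icc ⊥ a, ∑ z ∈ Icc y t, mu 𝕜 ⊥ y * mu 𝕜 z t :=
        sum_comm' fun z y => by simp only [mem_Icc, bot_le, le_inf_iff, true_and]; tauto
    _ = ∑ y ∈ Icc ⊥ a, mu 𝕜 ⊥ y * if y = t then 1 else 0 := by
        simp only [← mul_sum, sum_Icc_mu_left]
    _ = 0 := sum_eq_zero fun y hy => by
        rw [if_neg fun (hyt : y = t) => h (hyt ▸ (mem_Icc.1 hy).2), mul_zero]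

section Atoms

open scoped Classical

variable {L : Type*} [Lattice L] [Fintype L] [OrderBot L]

lemma sup_atoms_le_eq_of_pmu_ne_zero {t : L} (h : pmu L ⊥ t ≠ 0) :
    ({a | IsAtom a ∧ a ≤ t} : Finset L).sup id = t := by
  let := Fintype.toLocallyFiniteOrder (α := L)
  set s := ({a | IsAtom a ∧ a ≤ t} : Finset L).sup id
  have hst : s ≤ t := Finset.sup_le fun a ha => (mem_filter.1 ha).2.2
  by_contra hne
  have hdisj : {z ∈ Icc ⊥ t | z ⊓ s = ⊥} = {⊥} := by
    refine eq_singleton_iff_unique_mem.2 ⟨by simp, fun z hz => ?_⟩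
    obtain ⟨hzt, hzs⟩ : z ≤ t ∧ z ⊓ s = ⊥ := by simpa using hz
    by_contra hz
    obtain ⟨a, ha, haz⟩ := (eq_bot_or_exists_atom_le z).resolve_left hz
    have has : a ≤ s := le_sup (f := id) (by simpa using ⟨ha, haz.trans hzt⟩)
    exact ha.1 (le_bot_iff.1 (hzs ▸ le_inf haz has))
  have := sum_mu_inf_eq_bot (𝕜 := ℤ) fun hts => hne (hst.antisymm hts)
  rw [hdisj, sum_singleton, ← pmu_eq_mu_s15] at this
  exact h this

lemma card_atoms_le_lt_of_lt {c t : L} (h : pmu L ⊥ t ≠ 0) (hct : c < t) :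
    #{a | IsAtom a ∧ a ≤ c} < #{a | IsAtom a ∧ a ≤ t} := by
  refine card_lt_card ⟨fun a ha => ?_, fun hsub => ?_⟩
  · simp only [mem_filter, mem_univ, true_and] at ha ⊢
    exact ⟨ha.1, ha.2.trans hct.le⟩
  have : t ≤ c := by
    rw [← sup_atoms_le_eq_of_pmu_ne_zero h]
    exact Finset.sup_le fun a ha => (mem_filter.1 (hsub ha)).2.2
  exact hct.not_ge this

lemma le_card_atoms_le_of_intervalGraded (hμ : ∀ t : L, pmu L ⊥ t ≠ 0) {r : ℕ} {t : L}
    (h : IntervalGraded ⊥ t r) : r ≤ #{a | IsAtom a ∧ a ≤ t} := by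
  induction r generalizing t with
  | zero => exact Nat.zero_le _
  | succ r ih =>
    obtain ⟨c, hct⟩ := exists_covBy_of_wellFoundedGT (not_isMin_iff_ne_bot.2 h.ne_of_succ.symm)
    calc r ≤ #{a | IsAtom a ∧ a ≤ c} := ih (h.of_covBy_s15 bot_le hct)
      _ < #{a | IsAtom a ∧ a ≤ t} := card_atoms_le_lt_of_lt (hμ t) hct.lt

end Atoms

open scoped Classical in
lemma le_card_atoms_of_gradedRank {L : Type*} [Lattice L] [Fintype L] [BoundedOrder L] {d : ℕ}
    (hg : GradedRank (Set.univ : Set L) d) (hμ : ∀ t : L, pmu L ⊥ t ≠ 0) :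
    d ≤ #{a : L | IsAtom a} := by
  simpa using le_card_atoms_le_of_intervalGraded hμ hg.intervalGraded_bot_top

open scoped Classical in
/-- Every Eulerian lattice of rank `d` has at least `d` atoms; more
generally, every finite graded lattice of rank `d` with nowhere vanishing Möbius function
has at least `d` atoms. -/
theorem stmt15 :
    (∀ (α : Type) (_ : Lattice α) (_ : Fintype α) (_ : BoundedOrder α) (d : ℕ)
      (ρ : α → α → ℕ), LowerEulerianWith α ρ → GradedRank (Set.univ : Set α) d →
        d ≤ (Finset.univ.filter fun x : α => IsAtom x).card) ∧
    (∀ (α : Type) (_ : Lattice α) (_ : Fintype α) (_ : BoundedOrder α) (d : ℕ),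
      GradedRank (Set.univ : Set α) d → (∀ x y : α, x ≤ y → pmu α x y ≠ 0) →
        d ≤ (Finset.univ.filter fun x : α => IsAtom x).card) := by
  refine ⟨fun α _ _ _ d ρ hE hg => le_card_atoms_of_gradedRank hg fun t => ?_,
    fun α _ _ _ d hg hμ => le_card_atoms_of_gradedRank hg fun t => hμ ⊥ t bot_le⟩
  rw [(hE ⊥ t bot_le).2]
  exact pow_ne_zero _ (by norm_num)
end
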